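/- arXiv:2005.11028 — 3 statements merged into one kernel-verified Lean document; each statement's English description precedes it below -/
import Mathlib

section
/- Let (ε_n) be a strictly decreasing sequence in (0,1] with ε_n → 0, and let (r_n) be a real sequence defined for n ≥ n₀. Then there exists a continuously differentiable function f : [0,1] → ℝ with f(0) = 0, f'(0) = 0, and f(ε_n) = r_n for all n ≥ n₀, if and only if r_n → 0 and (r_n − r_{n+1})/(ε_n − ε_{n+1}) → 0 as n → ∞. -/
/-!
Necessity: `r n = f (ε n)` tends to `f 0 = 0`, and by the mean value theorem each difference
quotient of `r` is a value of `f'` in `(ε (n + 1), ε n)`, hence tends to `f' 0 = 0`.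

Sufficiency: on each gap `[ε (n + 1), ε n]` place a parabolic bump of integral `r n - r (n + 1)`.
Its height is `3 / 2` times the difference quotient, so these disjointly supported bumps sum to a
uniform limit of continuous functions `g` with `g 0 = 0`. Then `f x = ∫₀ˣ g` is `C¹`, and
`f (ε n) - r n` is independent of `n` and tends to `0`, hence vanishes.
-/

open Set Filter Topology Function

def parabolicBump (t : ℝ) : ℝ := max (6 * t * (1 - t)) 0

@[fun_prop]
theorem continuous_parabolicBump : Continuous parabolicBump := by
  unfold parabolicBump; fun_prop

theorem support_parabolicBump_subset : support parabolicBump ⊆ Ioo 0 1 := by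
  intro t ht
  by_contra hout
  rw [mem_Ioo, not_and_or, not_lt, not_lt] at hout
  apply ht
  refine max_eq_right ?_
  rcases hout with h | h <;> nlinarith

theorem abs_parabolicBump_le (t : ℝ) : |parabolicBump t| ≤ 3 / 2 := by
  rw [abs_of_nonneg (le_max_right _ _)]
  exact max_le (by nlinarith [sq_nonneg (2 * t - 1)]) (by norm_num)

theorem integral_parabolicBump : ∫ t in (0 : ℝ)..1, parabolicBump t = 1 := by
  have hquad : EqOn parabolicBump (fun t => 6 * t - 6 * t ^ 2) (uIcc 0 1) := by
    intro t ht
    rw [uIcc_of_le zero_le_one] at ht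
    refine (max_eq_left ?_).trans (by ring)
    nlinarith [ht.1, ht.2]
  rw [intervalIntegral.integral_congr hquad,
    intervalIntegral.integral_sub (by apply Continuous.intervalIntegrable; fun_prop)
      (by apply Continuous.intervalIntegrable; fun_prop),
    intervalIntegral.integral_const_mul, intervalIntegral.integral_const_mul]
  norm_num

noncomputable def intervalBump (p q v x : ℝ) : ℝ :=
  v / (q - p) * parabolicBump ((x - p) / (q - p))

theorem continuous_intervalBump (p q v : ℝ) : Continuous (intervalBump p q v) := by
  unfold intervalBump; fun_prop

theorem support_intervalBump_subset {p q : ℝ} (hpq : p < q) (v : ℝ) :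
    support (intervalBump p q v) ⊆ Ioo p q := by
  intro x hx
  have ht := support_parabolicBump_subset (right_ne_zero_of_mul hx)
  have hqp : 0 < q - p := sub_pos.2 hpq
  rw [mem_Ioo, lt_div_iff₀ hqp, div_lt_one hqp] at ht
  constructor <;> linarith [ht.1, ht.2]

theorem abs_intervalBump_le (p q v x : ℝ) : |intervalBump p q v x| ≤ 3 / 2 * |v / (q - p)| := by
  rw [intervalBump, abs_mul, mul_comm]
  exact mul_le_mul_of_nonneg_right (abs_parabolicBump_le _) (abs_nonneg _)

theorem integral_intervalBump {p q : ℝ} (hpq : p < q) (v : ℝ) :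
    ∫ x in p..q, intervalBump p q v x = v := by
  have hqp : q - p ≠ 0 := sub_ne_zero.2 hpq.ne'
  simp only [intervalBump, intervalIntegral.integral_const_mul, sub_div]
  rw [intervalIntegral.integral_comp_div_sub parabolicBump hqp, sub_self, ← sub_div, div_self hqp,
    integral_parabolicBump, smul_eq_mul]
  field_simp

theorem continuous_tsum_of_pairwise_disjoint_support {X E : Type*} [TopologicalSpace X]
    [NormedAddCommGroup E] {F : ℕ → X → E} (hF : ∀ m, Continuous (F m))
    (hdisj : Pairwise (Disjoint on fun m => support (F m))) {M : ℕ → ℝ}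
    (hM : Tendsto M atTop (𝓝 0)) (hFM : ∀ m x, ‖F m x‖ ≤ M m) :
    Continuous fun x => ∑' m, F m x := by
  classical
  refine TendstoUniformly.continuous (F := fun N x => ∑ m ∈ Finset.range N, F m x) (p := atTop)
    ?_ (Frequently.of_forall fun N => continuous_finsetSum _ fun m _ => hF m)
  rw [Metric.tendstoUniformly_iff]
  intro δ hδ
  obtain ⟨N, hN⟩ := eventually_atTop.1 (hM.eventually (gt_mem_nhds hδ))
  filter_upwards [eventually_ge_atTop N] with n hn x
  by_cases hx : ∃ m, F m x ≠ 0
  · obtain ⟨m, hm⟩ := hx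
    have hsingle : (fun k => F k x) = fun k => if k = m then F m x else 0 := by
      funext k
      split_ifs with hkm
      · rw [hkm]
      · by_contra hk
        exact Set.disjoint_left.1 (hdisj hkm) hk hm
    simp only [hsingle, tsum_ite_eq, Finset.sum_ite_eq', Finset.mem_range]
    split_ifs with hmn
    · simpa using hδ
    · rw [dist_zero_right]
      exact (hFM m x).trans_lt (hN m (hn.trans (not_lt.1 hmn)))
  · push Not at hx
    simpa [hx] using hδ

theorem StrictAnti.eq_of_mem_Icc_of_mem_Ioo {ε : ℕ → ℝ} (hε : StrictAnti ε) {m k : ℕ} {x : ℝ}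
    (hm : x ∈ Icc (ε (m + 1)) (ε m)) (hk : x ∈ Ioo (ε (k + 1)) (ε k)) : k = m := by
  by_contra hne
  rcases Nat.lt_or_gt_of_ne hne with hlt | hlt
  · linarith [hε.antitone (Nat.succ_le_of_lt hlt), hm.2, hk.1]
  · linarith [hε.antitone (Nat.succ_le_of_lt hlt), hm.1, hk.2]

noncomputable def interpolantDeriv (ε r : ℕ → ℝ) (x : ℝ) : ℝ :=
  ∑' m, intervalBump (ε (m + 1)) (ε m) (r m - r (m + 1)) x

noncomputable def interpolant (ε r : ℕ → ℝ) (x : ℝ) : ℝ :=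
  ∫ t in 0..x, interpolantDeriv ε r t

section Interpolant

variable {ε r : ℕ → ℝ}

theorem support_intervalBump_subset_of_strictAnti (hε : StrictAnti ε) (m : ℕ) :
    support (intervalBump (ε (m + 1)) (ε m) (r m - r (m + 1))) ⊆ Ioo (ε (m + 1)) (ε m) :=
  support_intervalBump_subset (hε (Nat.lt_succ_self m)) _

theorem interpolantDeriv_eq (hε : StrictAnti ε) {m : ℕ} {x : ℝ}
    (hx : x ∈ Icc (ε (m + 1)) (ε m)) :
    interpolantDeriv ε r x = intervalBump (ε (m + 1)) (ε m) (r m - r (m + 1)) x := by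
  refine tsum_eq_single m fun k hk => notMem_support.1 fun hxk => hk ?_
  exact hε.eq_of_mem_Icc_of_mem_Ioo hx (support_intervalBump_subset_of_strictAnti hε k hxk)

theorem interpolantDeriv_zero (hε : StrictAnti ε) (hε_lim : Tendsto ε atTop (𝓝 0)) :
    interpolantDeriv ε r 0 = 0 := by
  refine (tsum_congr fun m => notMem_support.1 fun h => ?_).trans tsum_zero
  have h0 := support_intervalBump_subset_of_strictAnti hε m h
  exact (hε.antitone.le_of_tendsto hε_lim (m + 1)).not_gt h0.1

theorem continuous_interpolantDeriv (hε : StrictAnti ε)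
    (hs : Tendsto (fun n => (r n - r (n + 1)) / (ε n - ε (n + 1))) atTop (𝓝 0)) :
    Continuous (interpolantDeriv ε r) := by
  refine continuous_tsum_of_pairwise_disjoint_support (fun m => continuous_intervalBump _ _ _)
    (fun k m hkm => Set.disjoint_left.2 fun x hk hm => hkm ?_)
    (by simpa using hs.abs.const_mul (3 / 2)) (fun m x => abs_intervalBump_le _ _ _ x)
  exact hε.eq_of_mem_Icc_of_mem_Ioo
    (Ioo_subset_Icc_self (support_intervalBump_subset_of_strictAnti hε m hm))
    (support_intervalBump_subset_of_strictAnti hε k hk)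

theorem integral_interpolantDeriv (hε : StrictAnti ε) (m : ℕ) :
    ∫ x in ε (m + 1)..ε m, interpolantDeriv ε r x = r m - r (m + 1) := by
  have hlt := hε (Nat.lt_succ_self m)
  rw [← integral_intervalBump hlt (r m - r (m + 1))]
  refine intervalIntegral.integral_congr fun x hx => interpolantDeriv_eq hε ?_
  rwa [uIcc_of_le hlt.le] at hx

theorem hasDerivAt_interpolant (hg : Continuous (interpolantDeriv ε r)) (x : ℝ) :
    HasDerivAt (interpolant ε r) (interpolantDeriv ε r x) x :=
  (hg.integral_hasStrictDerivAt 0 x).hasDerivAt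

theorem interpolant_interpolates (hε : StrictAnti ε) (hε_lim : Tendsto ε atTop (𝓝 0))
    (hr : Tendsto r atTop (𝓝 0))
    (hs : Tendsto (fun n => (r n - r (n + 1)) / (ε n - ε (n + 1))) atTop (𝓝 0)) (n : ℕ) :
    interpolant ε r (ε n) = r n := by
  have hg := continuous_interpolantDeriv hε hs
  set c : ℕ → ℝ := fun k => interpolant ε r (ε k) - r k
  have hstep : ∀ k, c (k + 1) = c k := by
    intro k
    have := intervalIntegral.integral_interval_sub_left
      (hg.intervalIntegrable (μ := MeasureTheory.volume) 0 (ε k))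
      (hg.intervalIntegrable 0 (ε (k + 1)))
    rw [integral_interpolantDeriv hε] at this
    simp only [c, interpolant]
    linarith
  have hconst : c = fun _ => c 0 := funext fun k => by
    induction k with
    | zero => rfl
    | succ k ih => rw [hstep, ih]
  have hlim : Tendsto c atTop (𝓝 0) := by
    have hcont : Continuous (interpolant ε r) :=
      continuous_iff_continuousAt.2 fun x => (hasDerivAt_interpolant hg x).continuousAt
    have h0 : interpolant ε r 0 = 0 := intervalIntegral.integral_same
    have hlim := ((hcont.tendsto 0).comp hε_lim).sub hr
    rwa [h0, sub_zero] at hlim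
  rw [hconst, tendsto_const_nhds_iff] at hlim
  exact sub_eq_zero.1 ((congrFun hconst n).trans hlim)

end Interpolant

theorem tendsto_slope_derivWithin_of_contDiffOn {ι : Type*} {l : Filter ι} {f : ℝ → ℝ} {a b : ℝ}
    (hab : a < b) (hf : ContDiffOn ℝ 1 f (Icc a b)) {x y : ι → ℝ} (hy : ∀ i, a ≤ y i)
    (hyx : ∀ i, y i < x i) (hx : ∀ i, x i ≤ b) (hx_lim : Tendsto x l (𝓝 a)) :
    Tendsto (fun i => (f (x i) - f (y i)) / (x i - y i)) l (𝓝 (derivWithin f (Icc a b) a)) := by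
  have hmvt : ∀ i, ∃ c ∈ Ioo (y i) (x i),
      derivWithin f (Icc a b) c = (f (x i) - f (y i)) / (x i - y i) := by
    intro i
    have hsub : Icc (y i) (x i) ⊆ Icc a b := Icc_subset_Icc (hy i) (hx i)
    obtain ⟨c, hc, hc_eq⟩ := exists_deriv_eq_slope f (hyx i) (hf.continuousOn.mono hsub)
      ((hf.differentiableOn one_ne_zero).mono (Ioo_subset_Icc_self.trans hsub))
    refine ⟨c, hc, (derivWithin_of_mem_nhds (Icc_mem_nhds ?_ ?_)).trans hc_eq⟩
    · exact (hy i).trans_lt hc.1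
    · exact hc.2.trans_le (hx i)
  choose c hc hc_eq using hmvt
  have hc_lim : Tendsto c l (𝓝[Icc a b] a) := by
    refine tendsto_nhdsWithin_iff.2 ⟨?_, Eventually.of_forall fun i =>
      ⟨(hy i).trans (hc i).1.le, (hc i).2.le.trans (hx i)⟩⟩
    exact tendsto_of_tendsto_of_tendsto_of_le_of_le tendsto_const_nhds hx_lim
      (fun i => (hy i).trans (hc i).1.le) (fun i => (hc i).2.le)
  have hcont := hf.continuousOn_derivWithin (uniqueDiffOn_Icc hab) le_rfl a ⟨le_rfl, hab.le⟩
  exact (hcont.tendsto.comp hc_lim).congr hc_eq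

theorem exists_contDiff_interpolation {ε r : ℕ → ℝ} (hε : StrictAnti ε)
    (hε_lim : Tendsto ε atTop (𝓝 0)) (hr : Tendsto r atTop (𝓝 0))
    (hs : Tendsto (fun n => (r n - r (n + 1)) / (ε n - ε (n + 1))) atTop (𝓝 0)) (n₀ : ℕ) :
    ∃ f : ℝ → ℝ, ContDiff ℝ 1 f ∧ f 0 = 0 ∧ HasDerivAt f 0 0 ∧ ∀ n ≥ n₀, f (ε n) = r n := by
  set r' : ℕ → ℝ := fun n => r (max n n₀)
  have hr' : ∀ n ≥ n₀, r' n = r n := fun n hn => congrArg r (max_eq_left hn)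
  have hr'_ev : r =ᶠ[atTop] r' := eventually_atTop.2 ⟨n₀, fun n hn => (hr' n hn).symm⟩
  have hs' : Tendsto (fun n => (r' n - r' (n + 1)) / (ε n - ε (n + 1))) atTop (𝓝 0) := by
    refine hs.congr' ?_
    filter_upwards [hr'_ev, (tendsto_add_atTop_nat 1).eventually hr'_ev] with n hn hn1
    rw [hn, hn1]
  have hg := continuous_interpolantDeriv hε hs'
  have hderiv := hasDerivAt_interpolant hg
  refine ⟨interpolant ε r', ?_, intervalIntegral.integral_same, ?_, fun n hn => ?_⟩
  · rw [contDiff_one_iff_deriv, funext fun x => (hderiv x).deriv]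
    exact ⟨fun x => (hderiv x).differentiableAt, hg⟩
  · simpa only [interpolantDeriv_zero hε hε_lim] using hderiv 0
  · rw [interpolant_interpolates hε hε_lim (hr.congr' hr'_ev) hs' n, hr' n hn]

/-- Interpolation lemma: a sequence `r n` can be interpolated at points `ε n`
by a `C¹` function on `[0,1]` vanishing to first order at `0` iff both
`r n → 0` and `(r n - r (n+1))/(ε n - ε (n+1)) → 0`. -/
theorem stmt0 (ε : ℕ → ℝ) (hε_anti : StrictAnti ε)
    (hε_mem : ∀ n, ε n ∈ Set.Ioc (0 : ℝ) 1)
    (hε_lim : Filter.Tendsto ε Filter.atTop (nhds 0))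
    (r : ℕ → ℝ) (n₀ : ℕ) :
    (∃ f : ℝ → ℝ, ContDiffOn ℝ 1 f (Set.Icc 0 1) ∧ f 0 = 0 ∧
        derivWithin f (Set.Icc 0 1) 0 = 0 ∧ ∀ n, n₀ ≤ n → f (ε n) = r n) ↔
      (Filter.Tendsto r Filter.atTop (nhds 0) ∧
        Filter.Tendsto (fun n => (r n - r (n + 1)) / (ε n - ε (n + 1)))
          Filter.atTop (nhds 0)) := by
  have h0 : (0 : ℝ) ∈ Icc 0 1 := ⟨le_rfl, zero_le_one⟩
  constructor
  · rintro ⟨f, hf, hf0, hfd0, hfe⟩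
    have hεI : Tendsto ε atTop (𝓝[Icc 0 1] 0) :=
      tendsto_nhdsWithin_iff.2 ⟨hε_lim, .of_forall fun n => Ioc_subset_Icc_self (hε_mem n)⟩
    refine ⟨?_, ?_⟩
    · exact (hf0 ▸ (hf.continuousOn 0 h0).tendsto.comp hεI).congr'
        (eventually_atTop.2 ⟨n₀, hfe⟩)
    · refine (hfd0 ▸ tendsto_slope_derivWithin_of_contDiffOn zero_lt_one hf
        (fun n => (hε_mem (n + 1)).1.le) (fun n => hε_anti n.lt_succ_self) (fun n => (hε_mem n).2)
        hε_lim).congr' ?_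
      filter_upwards [eventually_ge_atTop n₀] with n hn
      rw [hfe n hn, hfe (n + 1) (by omega)]
  · rintro ⟨hr, hs⟩
    obtain ⟨f, hf, hf0, hfd0, hfe⟩ := exists_contDiff_interpolation hε_anti hε_lim hr hs n₀
    exact ⟨f, hf.contDiffOn, hf0,
      hfd0.hasDerivWithinAt.derivWithin (uniqueDiffOn_Icc zero_lt_one 0 h0), hfe⟩
end

section
/- Let X be a real random variable with CGF K finite on an open interval containing ŝ, and suppose K'(ŝ) = x and the characteristic function φ ↦ M(ŝ + iφ) is integrable over ℝ. Then the density f of X at x satisfies the exact factorization f(x) = exp(K(ŝ) − ŝ x) · P(ŝ), where P(ŝ) = (2π)^{-1} ∫_ℝ exp( K(ŝ + iφ) − K(ŝ) − iφ K'(ŝ) ) dφ. -/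
/-!
The tilted function `g t = f t * exp (ŝ t)` is integrable with Fourier transform `φ ↦ M(ŝ + iφ)`
(in the `e^{iφt}` convention), so Fourier inversion at `x` gives
`f x * exp (ŝ x) = (2π)⁻¹ ∫ M(ŝ + iφ) e^{-iφx} dφ`; dividing by `M(ŝ) = exp (K ŝ)` is the claim.
Since `f` enters only through `withDensity` and need not be measurable, inversion is applied to the
Radon–Nikodym derivative of `μ` instead, after changing it on a null set: continuity of `f` at `x`
pins that derivative down a.e. near `x`, which is enough to make the modification continuous at
`x` with value `f x`.
-/

open MeasureTheory Real Filter Topology Complex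
open scoped ENNReal FourierTransform

theorem MeasureTheory.Integrable.inv_two_pi_smul_integral_mul_exp_eq {g : ℝ → ℂ}
    (hg : Integrable g) {x : ℝ} (hgx : ContinuousAt g x)
    (hĝ : Integrable fun φ : ℝ => ∫ t : ℝ, cexp (I * φ * t) * g t) :
    (2 * π)⁻¹ • ∫ φ : ℝ, (∫ t : ℝ, cexp (I * φ * t) * g t) * cexp (-(I * φ * x)) = g x := by
  set ĝ : ℝ → ℂ := fun φ => ∫ t : ℝ, cexp (I * φ * t) * g t
  have h𝓕 : 𝓕 g = fun w => ĝ (-(2 * π) * w) := by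
    ext w
    rw [fourier_real_eq_integral_exp_smul]
    refine integral_congr_ae (ae_of_all _ fun t => ?_)
    simp only [smul_eq_mul]
    push_cast
    ring_nf
  have h𝓕_int : Integrable (𝓕 g) := h𝓕 ▸ hĝ.comp_mul_left' (by simp [pi_ne_zero])
  rw [← hg.fourierInv_fourier_eq h𝓕_int hgx, fourierInv_eq_fourier_neg,
    fourier_real_eq_integral_exp_smul, h𝓕]
  trans ∫ w : ℝ, (fun φ : ℝ => ĝ φ * cexp (-(I * φ * x))) (-(2 * π) * w)
  · rw [Measure.integral_comp_mul_left (fun φ : ℝ => ĝ φ * cexp (-(I * φ * x))), abs_inv,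
      abs_neg, abs_of_pos two_pi_pos]
  · refine integral_congr_ae (ae_of_all _ fun w => ?_)
    simp only [smul_eq_mul]
    push_cast
    ring_nf

theorem exists_ae_eq_continuousAt_of_forall_exists_mem_nhds_ae {α E : Type*}
    [TopologicalSpace α] [MeasurableSpace α] [MetricSpace E] {μ : Measure α} {h : α → E}
    {x : α} {c : E} (hh : ∀ ε > 0, ∃ U ∈ 𝓝 x, ∀ᵐ t ∂μ, t ∈ U → dist (h t) c ≤ ε) :
    ∃ d : α → E, d =ᵐ[μ] h ∧ ContinuousAt d x ∧ d x = c := by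
  classical
  choose U hU hae using fun n : ℕ => hh (1 / (n + 1)) Nat.one_div_pos_of_nat
  set G := {t | ∀ n, t ∈ U n → dist (h t) c ≤ 1 / (n + 1)}
  set d := G.piecewise h fun _ => c
  have hd_mem : ∀ t ∈ G, d t = h t := fun t => Set.piecewise_eq_of_mem _ _ _
  have hd_notMem : ∀ t ∉ G, d t = c := fun t => Set.piecewise_eq_of_notMem _ _ _
  have hlim : Tendsto d (𝓝 x) (𝓝 c) := Metric.tendsto_nhds.2 fun ε hε => by
    obtain ⟨n, hn⟩ := exists_nat_one_div_lt hε
    filter_upwards [hU n] with t ht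
    by_cases htG : t ∈ G
    · rw [hd_mem t htG]
      exact (htG n ht).trans_lt hn
    · rwa [hd_notMem t htG, dist_self]
  have hdx : d x = c :=
    tendsto_nhds_unique (tendsto_pure_nhds d x) (hlim.mono_left (pure_le_nhds x))
  refine ⟨d, ?_, by rwa [ContinuousAt, hdx], hdx⟩
  filter_upwards [ae_all_iff.2 hae] with t ht using hd_mem t ht

section RadonNikodym

variable {α : Type*} [MeasurableSpace α] {ν : Measure α} [SigmaFinite ν]

theorem ae_rnDeriv_withDensity_mem_Icc {F : α → ℝ≥0∞} [SigmaFinite (ν.withDensity F)]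
    {B : Set α} (hB : MeasurableSet B) {a b : ℝ≥0∞} (hF : ∀ t ∈ B, F t ∈ Set.Icc a b) :
    ∀ᵐ t ∂ν, t ∈ B → (ν.withDensity F).rnDeriv ν t ∈ Set.Icc a b := by
  have hint : ∀ s, MeasurableSet s →
      ∫⁻ t in s ∩ B, (ν.withDensity F).rnDeriv ν t ∂ν = ∫⁻ t in s ∩ B, F t ∂ν := fun s hs => by
    rw [Measure.setLIntegral_rnDeriv (withDensity_absolutelyContinuous _ _),
      withDensity_apply _ (hs.inter hB)]
  have hge : (fun _ => a) ≤ᵐ[ν.restrict B] (ν.withDensity F).rnDeriv ν :=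
    ae_le_of_forall_setLIntegral_le_of_sigmaFinite measurable_const fun s hs _ => by
      rw [Measure.restrict_restrict hs, hint s hs]
      exact setLIntegral_mono' (hs.inter hB) fun t ht => (hF t ht.2).1
  have hle : (ν.withDensity F).rnDeriv ν ≤ᵐ[ν.restrict B] fun _ => b :=
    ae_le_of_forall_setLIntegral_le_of_sigmaFinite (Measure.measurable_rnDeriv _ _)
      fun s hs _ => by
        rw [Measure.restrict_restrict hs, hint s hs]
        exact setLIntegral_mono' (hs.inter hB) fun t ht => (hF t ht.2).2
  rw [← ae_restrict_iff' hB]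
  filter_upwards [hge, hle] with t h₁ h₂ using ⟨h₁, h₂⟩

theorem exists_mem_nhds_ae_dist_toReal_rnDeriv_withDensity_le [TopologicalSpace α]
    [OpensMeasurableSpace α] {f : α → ℝ}
    [SigmaFinite (ν.withDensity fun t => ENNReal.ofReal (f t))]
    {x : α} (hf : ContinuousAt f x) (hfx : 0 ≤ f x) {ε : ℝ} (hε : 0 < ε) :
    ∃ U ∈ 𝓝 x, ∀ᵐ t ∂ν, t ∈ U →
      dist ((ν.withDensity fun t => ENNReal.ofReal (f t)).rnDeriv ν t).toReal (f x) ≤ ε := by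
  obtain ⟨U, hUf, hUo, hxU⟩ := eventually_nhds_iff.1 (Metric.tendsto_nhds.1 hf ε hε)
  refine ⟨U, hUo.mem_nhds hxU, ?_⟩
  have hF : ∀ t ∈ U, ENNReal.ofReal (f t) ∈
      Set.Icc (ENNReal.ofReal (f x - ε)) (ENNReal.ofReal (f x + ε)) := fun t ht => by
    have := abs_lt.1 (Real.dist_eq _ _ ▸ hUf t ht)
    exact ⟨ENNReal.ofReal_le_ofReal (by linarith), ENNReal.ofReal_le_ofReal (by linarith)⟩
  filter_upwards [ae_rnDeriv_withDensity_mem_Icc hUo.measurableSet hF] with t ht htU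
  obtain ⟨h₁, h₂⟩ := ht htU
  have h₁' :=
    (ENNReal.ofReal_le_iff_le_toReal (ne_top_of_le_ne_top ENNReal.ofReal_ne_top h₂)).1 h₁
  have h₂' := ENNReal.toReal_le_of_le_ofReal (by linarith) h₂
  rw [Real.dist_eq, abs_le]
  constructor <;> linarith

end RadonNikodym

section ChangeOfMeasure

variable {α E : Type*} [MeasurableSpace α] [NormedAddCommGroup E] [NormedSpace ℝ E]
  {μ ν : Measure α} [μ.HaveLebesgueDecomposition ν] [SigmaFinite μ] {d : α → ℝ}

theorem integral_eq_integral_smul_of_ae_eq_toReal_rnDeriv (hμν : μ ≪ ν)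
    (hd : d =ᵐ[ν] fun t => (μ.rnDeriv ν t).toReal) (G : α → E) :
    ∫ t, G t ∂μ = ∫ t, d t • G t ∂ν := by
  rw [← integral_rnDeriv_smul hμν]
  exact integral_congr_ae (hd.mono fun t ht => by simp only [ht])

theorem MeasureTheory.Integrable.smul_of_ae_eq_toReal_rnDeriv (hμν : μ ≪ ν)
    (hd : d =ᵐ[ν] fun t => (μ.rnDeriv ν t).toReal) {G : α → E} (hG : Integrable G μ) :
    Integrable (fun t => d t • G t) ν :=
  ((integrable_rnDeriv_smul_iff hμν).2 hG).congr (hd.mono fun t ht => by simp only [ht])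

end ChangeOfMeasure

theorem stmt4_general (f : ℝ → ℝ) (hf_nonneg : ∀ x, 0 ≤ f x)
    (μ : Measure ℝ)
    (hμ : μ = MeasureTheory.volume.withDensity fun x => ENNReal.ofReal (f x))
    [IsProbabilityMeasure μ]
    (S : Set ℝ) (shat : ℝ) (hshat : shat ∈ S)
    (hint : ∀ s ∈ S, Integrable (fun x => Real.exp (s * x)) μ)
    (K : ℝ → ℝ) (hK : ∀ s, K s = Real.log (∫ x, Real.exp (s * x) ∂μ))
    (x : ℝ)
    (Mc : ℂ → ℂ) (hMc : ∀ z, Mc z = ∫ t, Complex.exp (z * t) ∂μ)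
    (hchar_int : Integrable (fun φ : ℝ => Mc (shat + Complex.I * φ)))
    (hcont : ContinuousAt f x) :
    (f x : ℂ) = Real.exp (K shat - shat * x) *
      ((2 * Real.pi)⁻¹ •
        ∫ φ : ℝ, (Mc (shat + Complex.I * φ) / Mc shat) *
          Complex.exp (-(Complex.I * φ * x))) := by
  have hac : μ ≪ volume := hμ ▸ withDensity_absolutelyContinuous _ _
  obtain ⟨d, hd, hd_cont, hdx⟩ := exists_ae_eq_continuousAt_of_forall_exists_mem_nhds_ae
    fun ε hε => hμ ▸ exists_mem_nhds_ae_dist_toReal_rnDeriv_withDensity_le hcont (hf_nonneg x) hε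
  set g : ℝ → ℂ := fun t => d t • cexp (shat * t)
  have hMc_eq (φ : ℝ) : Mc (shat + I * φ) = ∫ t : ℝ, cexp (I * φ * t) * g t := by
    rw [hMc, integral_eq_integral_smul_of_ae_eq_toReal_rnDeriv hac hd]
    refine integral_congr_ae (ae_of_all _ fun t => ?_)
    simp only [g, mul_smul_comm, ← Complex.exp_add]
    congr 2
    ring
  have hexp : Integrable (fun t : ℝ => cexp (shat * t)) μ :=
    (hint shat hshat).ofReal.congr (ae_of_all _ fun t => by
      simp only [RCLike.ofReal_eq_complex_ofReal, Complex.ofReal_exp, Complex.ofReal_mul])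
  have hg_int : Integrable g := hexp.smul_of_ae_eq_toReal_rnDeriv hac hd
  have hinv : (2 * π)⁻¹ • ∫ φ : ℝ, Mc (shat + I * φ) * cexp (-(I * φ * x)) =
      f x * cexp (shat * x) := by
    simpa only [hMc_eq, g, hdx, Complex.real_smul] using hg_int.inv_two_pi_smul_integral_mul_exp_eq
      (hd_cont.smul (by fun_prop : Continuous fun t : ℝ => cexp (shat * t)).continuousAt)
      (by simpa only [← hMc_eq] using hchar_int)
  have hM : Mc shat = Real.exp (K shat) := by
    rw [hK, Real.exp_log (integral_exp_pos (hint shat hshat)), hMc, ← integral_complex_ofReal]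
    push_cast
    rfl
  simp only [div_mul_eq_mul_div, integral_div, ← smul_div_assoc, hinv, hM]
  push_cast
  rw [Complex.exp_sub]
  field_simp

/-- Exact tilting factorization of the density via Fourier inversion:
`f(x) = exp(K(shat) - shatx) · P(shat)` where `P(shat)` is the inversion integral for the
tilted distribution at its mean, interpreted through `M(shat+iφ)/M(shat)` and the
saddlepoint relation `K'(shat) = x`. -/
theorem stmt4 (f : ℝ → ℝ) (hf_nonneg : ∀ x, 0 ≤ f x)
    (μ : Measure ℝ)
    (hμ : μ = MeasureTheory.volume.withDensity fun x => ENNReal.ofReal (f x))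
    [IsProbabilityMeasure μ]
    (S : Set ℝ) (hS : IsOpen S) (shat : ℝ) (hshat : shat ∈ S)
    (hint : ∀ s ∈ S, Integrable (fun x => Real.exp (s * x)) μ)
    (K : ℝ → ℝ) (hK : ∀ s, K s = Real.log (∫ x, Real.exp (s * x) ∂μ))
    (x : ℝ) (hsaddle : HasDerivAt K x shat)
    (Mc : ℂ → ℂ) (hMc : ∀ z, Mc z = ∫ t, Complex.exp (z * t) ∂μ)
    (hchar_int : Integrable (fun φ : ℝ => Mc (shat + Complex.I * φ)))
    (hcont : ContinuousAt f x) :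
    (f x : ℂ) = Real.exp (K shat - shat * x) *
      ((2 * Real.pi)⁻¹ •
        ∫ φ : ℝ, (Mc (shat + Complex.I * φ) / Mc shat) *
          Complex.exp (-(Complex.I * φ * x))) :=
  stmt4_general f hf_nonneg μ hμ S shat hshat hint K hK x Mc hMc hchar_int hcont
end

section
/- Under the hypotheses of the preceding setup (K twice differentiable, K'' positive definite, ŝ solving K'(ŝ;θ)=x), the θ-Hessian of log L̂*(θ;x) = K(ŝ(θ;x);θ) − ŝ(θ;x)·x equals ∇²_θ K(ŝ;θ) − (∇_s∇_θ K(ŝ;θ))ᵀ K''(ŝ;θ)^{-1} (∇_s∇_θ K(ŝ;θ)), evaluated at ŝ = ŝ(θ;x). -/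
/-!
Write `H` for the Hessian of `K` at `(ŝ(θ₀), θ₀)` and `ŝ'` for the derivative of `ŝ` at `θ₀`.
Since `ŝ(θ)` is a critical point of `s ↦ K(s;θ) - s·x`, the envelope theorem gives
`∇_θ log L̂*(θ) = ∇_θ K(ŝ(θ);θ)` near `θ₀`; differentiating once more, the Hessian of
`log L̂*` is `∇²_θ K + ŝ'ᵀ ∇_s∇_θ K`. Differentiating the saddlepoint equation gives
`K'' ŝ' = -∇_s∇_θ K`, so `ŝ' = -K''⁻¹ ∇_s∇_θ K`, and the Hessian is the Schur complement
`∇²_θ K - (∇_s∇_θ K)ᵀ K''⁻¹ ∇_s∇_θ K` of the block `K''` in `H`.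
-/

open Matrix Real

noncomputable def sHess {m : ℕ} (K : (Fin m → ℝ) → ℝ) (s : Fin m → ℝ) :
    Matrix (Fin m) (Fin m) ℝ :=
  Matrix.of fun i j =>
    fderiv ℝ (fun u => fderiv ℝ K u (Pi.single j 1)) s (Pi.single i 1)

open Filter Topology ContinuousLinearMap

section Calculus

variable {E₁ E₂ E G : Type*} [NormedAddCommGroup E₁] [NormedSpace ℝ E₁]
  [NormedAddCommGroup E₂] [NormedSpace ℝ E₂] [NormedAddCommGroup E] [NormedSpace ℝ E]
  [NormedAddCommGroup G] [NormedSpace ℝ G]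

theorem ContDiff.differentiable_fderiv {F : E → G} (hF : ContDiff ℝ 2 F) :
    Differentiable ℝ (fderiv ℝ F) :=
  (hF.fderiv_right (m := 1) le_rfl).differentiable one_ne_zero

theorem fderiv_comp_prodMk_left_apply {F : E₁ × E₂ → G} {s : E₁} {θ : E₂}
    (hF : DifferentiableAt ℝ F (s, θ)) (v : E₁) :
    fderiv ℝ (fun s => F (s, θ)) s v = fderiv ℝ F (s, θ) (v, 0) := by
  have h : HasFDerivAt (fun s => F (s, θ)) _ s :=
    hF.hasFDerivAt.comp s (hasFDerivAt_prodMk_left s θ)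
  simp [h.fderiv]

theorem fderiv_comp_prodMk_right_apply {F : E₁ × E₂ → G} {s : E₁} {θ : E₂}
    (hF : DifferentiableAt ℝ F (s, θ)) (v : E₂) :
    fderiv ℝ (fun θ => F (s, θ)) θ v = fderiv ℝ F (s, θ) (0, v) := by
  have h : HasFDerivAt (fun θ => F (s, θ)) _ θ :=
    hF.hasFDerivAt.comp θ (hasFDerivAt_prodMk_right s θ)
  simp [h.fderiv]

theorem fderiv_fderiv_apply_comp {F : E → G} {c : E₂ → E} {c' : E₂ →L[ℝ] E} {θ : E₂}
    (hF : DifferentiableAt ℝ (fderiv ℝ F) (c θ)) (hc : HasFDerivAt c c' θ) (w : E) (v : E₂) :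
    fderiv ℝ (fun t => fderiv ℝ F (c t) w) θ v = fderiv ℝ (fderiv ℝ F) (c θ) (c' v) w := by
  have h : HasFDerivAt (fun t => fderiv ℝ F (c t) w) _ θ :=
    (hF.hasFDerivAt.comp θ hc).clm_apply (hasFDerivAt_const w θ)
  simp [h.fderiv]

theorem fderiv_fderiv_comp_prodMk_left_left {F : E₁ × E₂ → G} (hF : ContDiff ℝ 2 F) (s : E₁)
    (θ : E₂) (v w : E₁) :
    fderiv ℝ (fun u => fderiv ℝ (fun s => F (s, θ)) u w) s v
      = fderiv ℝ (fderiv ℝ F) (s, θ) (v, 0) (w, 0) := by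
  have hpartial :
      (fun u => fderiv ℝ (fun s => F (s, θ)) u w) = fun u => fderiv ℝ F (u, θ) (w, 0) :=
    funext fun u => fderiv_comp_prodMk_left_apply (hF.differentiable two_ne_zero _) w
  rw [hpartial, fderiv_fderiv_apply_comp (hF.differentiable_fderiv _)
    (hasFDerivAt_prodMk_left s θ)]
  rfl

theorem fderiv_fderiv_comp_prodMk_left_right {F : E₁ × E₂ → G} (hF : ContDiff ℝ 2 F) (s : E₁)
    (θ v : E₂) (w : E₁) :
    fderiv ℝ (fun θ => fderiv ℝ (fun s => F (s, θ)) s w) θ v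
      = fderiv ℝ (fderiv ℝ F) (s, θ) (0, v) (w, 0) := by
  have hpartial :
      (fun θ => fderiv ℝ (fun s => F (s, θ)) s w) = fun θ => fderiv ℝ F (s, θ) (w, 0) :=
    funext fun θ => fderiv_comp_prodMk_left_apply (hF.differentiable two_ne_zero _) w
  rw [hpartial, fderiv_fderiv_apply_comp (hF.differentiable_fderiv _)
    (hasFDerivAt_prodMk_right s θ)]
  rfl

theorem fderiv_fderiv_comp_prodMk_right_right {F : E₁ × E₂ → G} (hF : ContDiff ℝ 2 F)
    (s : E₁) (θ v w : E₂) :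
    fderiv ℝ (fun θ => fderiv ℝ (fun θ' => F (s, θ')) θ w) θ v
      = fderiv ℝ (fderiv ℝ F) (s, θ) (0, v) (0, w) := by
  have hpartial :
      (fun θ => fderiv ℝ (fun θ' => F (s, θ')) θ w) = fun θ => fderiv ℝ F (s, θ) (0, w) :=
    funext fun θ => fderiv_comp_prodMk_right_apply (hF.differentiable two_ne_zero _) w
  rw [hpartial, fderiv_fderiv_apply_comp (hF.differentiable_fderiv _)
    (hasFDerivAt_prodMk_right s θ)]
  rfl

theorem DifferentiableAt.hasFDerivAt_graph {ŝ : E₂ → E₁} {θ : E₂}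
    (hŝ : DifferentiableAt ℝ ŝ θ) :
    HasFDerivAt (fun t => (ŝ t, t)) ((fderiv ℝ ŝ θ).prod (.id ℝ E₂)) θ :=
  hŝ.hasFDerivAt.prodMk (hasFDerivAt_id θ)

/-- The envelope theorem: the contribution of `ŝ` drops out because `ŝ θ` is a critical point
of `s ↦ F (s, θ) - L s`. -/
theorem fderiv_sub_comp_of_fderiv_eq {F : E₁ × E₂ → G} {L : E₁ →L[ℝ] G} {ŝ : E₂ → E₁}
    {θ : E₂} (hF : DifferentiableAt ℝ F (ŝ θ, θ)) (hŝ : DifferentiableAt ℝ ŝ θ)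
    (hcrit : fderiv ℝ (fun s => F (s, θ)) (ŝ θ) = L) :
    fderiv ℝ (fun θ => F (ŝ θ, θ) - L (ŝ θ)) θ = (fderiv ℝ F (ŝ θ, θ)).comp (inr ℝ E₁ E₂) := by
  have h : HasFDerivAt (fun θ => F (ŝ θ, θ) - L (ŝ θ)) _ θ :=
    (HasFDerivAt.comp (f := fun t => (ŝ t, t)) θ hF.hasFDerivAt hŝ.hasFDerivAt_graph).sub
      (L.hasFDerivAt.comp θ hŝ.hasFDerivAt)
  rw [h.fderiv]
  ext v
  have hsplit : (fderiv ℝ ŝ θ v, v) = (fderiv ℝ ŝ θ v, (0 : E₂)) + (0, v) := by simp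
  simp only [_root_.sub_apply, ContinuousLinearMap.comp_apply, prod_apply, coe_id', id_eq,
    inr_apply, hsplit, map_add, ← fderiv_comp_prodMk_left_apply hF, hcrit]
  abel

variable {F : E₁ × E₂ → G} {L : E₁ →L[ℝ] G} {ŝ : E₂ → E₁} {θ₀ : E₂}

theorem fderiv_fderiv_apply_tangent_inl_eq_zero (hF : ContDiff ℝ 2 F)
    (hŝ : DifferentiableAt ℝ ŝ θ₀)
    (hcrit : ∀ᶠ θ in 𝓝 θ₀, fderiv ℝ (fun s => F (s, θ)) (ŝ θ) = L) (v : E₂) (w : E₁) :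
    fderiv ℝ (fderiv ℝ F) (ŝ θ₀, θ₀) (fderiv ℝ ŝ θ₀ v, v) (w, 0) = 0 := by
  have hconst : (fun θ => fderiv ℝ F (ŝ θ, θ) (w, 0)) =ᶠ[𝓝 θ₀] fun _ => L w := by
    filter_upwards [hcrit] with θ hθ
    rw [← fderiv_comp_prodMk_left_apply (hF.differentiable two_ne_zero _), hθ]
  have h := fderiv_fderiv_apply_comp (hF.differentiable_fderiv _) hŝ.hasFDerivAt_graph
    (w, (0 : E₂)) v
  rw [hconst.fderiv_eq] at h
  simpa using h.symm

theorem fderiv_fderiv_sub_comp_apply (hF : ContDiff ℝ 2 F)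
    (hŝ : ∀ᶠ θ in 𝓝 θ₀, DifferentiableAt ℝ ŝ θ)
    (hcrit : ∀ᶠ θ in 𝓝 θ₀, fderiv ℝ (fun s => F (s, θ)) (ŝ θ) = L) (v w : E₂) :
    fderiv ℝ (fun θ => fderiv ℝ (fun θ => F (ŝ θ, θ) - L (ŝ θ)) θ w) θ₀ v
      = fderiv ℝ (fderiv ℝ F) (ŝ θ₀, θ₀) (fderiv ℝ ŝ θ₀ v, v) (0, w) := by
  have hgrad : (fun θ => fderiv ℝ (fun θ => F (ŝ θ, θ) - L (ŝ θ)) θ w)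
      =ᶠ[𝓝 θ₀] fun θ => fderiv ℝ F (ŝ θ, θ) (0, w) := by
    filter_upwards [hŝ, hcrit] with θ hŝθ hθ
    rw [fderiv_sub_comp_of_fderiv_eq (hF.differentiable two_ne_zero _) hŝθ hθ]
    rfl
  rw [hgrad.fderiv_eq]
  exact fderiv_fderiv_apply_comp (hF.differentiable_fderiv _)
    hŝ.self_of_nhds.hasFDerivAt_graph _ _

end Calculus

theorem Matrix.add_transpose_mul_eq_sub_of_mul_eq_neg {ι κ R : Type*} [Fintype ι]
    [DecidableEq ι] [CommRing R] {A : Matrix ι ι R} {B S : Matrix ι κ R} (D : Matrix κ κ R)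
    (hA : Aᵀ = A) (hdet : IsUnit A.det) (hS : A * S = -B) :
    D + Sᵀ * B = D - Bᵀ * A⁻¹ * B := by
  have hS' : S = -(A⁻¹ * B) := by
    rw [← nonsing_inv_mul_cancel_left A S hdet, hS, Matrix.mul_neg]
  rw [hS', transpose_neg, transpose_mul, transpose_nonsing_inv, hA, Matrix.neg_mul,
    Matrix.mul_assoc, sub_eq_add_neg]

section Blocks

variable {ι κ : Type*} (H : (ι → ℝ) × (κ → ℝ) →L[ℝ] (ι → ℝ) × (κ → ℝ) →L[ℝ] ℝ)

/-- With `H` the Hessian of `K` at `(ŝ, θ)`, the blocks `ssBlock H`, `sθBlock H`, `θθBlock H`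
are the paper's `K''`, `∇_s∇_θ K` and `∇²_θ K`. -/
noncomputable def ssBlock [DecidableEq ι] : Matrix ι ι ℝ :=
  of fun a b => H (Pi.single a 1, 0) (Pi.single b 1, 0)

noncomputable def sθBlock [DecidableEq ι] [DecidableEq κ] : Matrix ι κ ℝ :=
  of fun a j => H (0, Pi.single j 1) (Pi.single a 1, 0)

noncomputable def θθBlock [DecidableEq κ] : Matrix κ κ ℝ :=
  of fun i j => H (0, Pi.single i 1) (0, Pi.single j 1)

theorem ssBlock_transpose [DecidableEq ι] (hH : ∀ u v, H u v = H v u) :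
    (ssBlock H)ᵀ = ssBlock H := by
  ext a b
  exact hH _ _

theorem apply_prodMk_eq_add (u : ι → ℝ) (v : κ → ℝ) (y : (ι → ℝ) × (κ → ℝ)) :
    H (u, v) y = H (u, 0) y + H (0, v) y := by
  rw [← _root_.add_apply, ← map_add, Prod.mk_add_mk, add_zero, zero_add]

theorem apply_inl_eq_sum [Fintype ι] [DecidableEq ι] (u : ι → ℝ) (y : (ι → ℝ) × (κ → ℝ)) :
    H (u, 0) y = ∑ b, u b * H (Pi.single b 1, 0) y := by
  change (H.comp (inl ℝ (ι → ℝ) (κ → ℝ))) u y = _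
  have hsingle (b : ι) : Pi.single b (u b) = u b • (Pi.single b 1 : ι → ℝ) := by
    rw [← Pi.single_smul', smul_eq_mul, mul_one]
  conv_lhs => rw [← Finset.univ_sum_single u]
  simp [hsingle]

variable [Fintype ι] [DecidableEq ι] [Fintype κ] [DecidableEq κ] {H}

theorem ssBlock_mul_toMatrix' (hH : ∀ u v, H u v = H v u) {S : (κ → ℝ) →L[ℝ] (ι → ℝ)}
    (hS : ∀ v w, H (S v, v) (w, 0) = 0) :
    ssBlock H * LinearMap.toMatrix' (S : (κ → ℝ) →ₗ[ℝ] (ι → ℝ)) = -sθBlock H := by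
  ext a i
  have hsaddle := hS (Pi.single i 1) (Pi.single a 1)
  rw [apply_prodMk_eq_add, apply_inl_eq_sum] at hsaddle
  simp only [Matrix.mul_apply, Matrix.neg_apply, ssBlock, sθBlock, of_apply,
    LinearMap.toMatrix'_apply, coe_coe]
  rw [eq_neg_iff_add_eq_zero, ← hsaddle]
  congr 1
  exact Finset.sum_congr rfl fun b _ => by rw [mul_comm, hH]

theorem of_apply_tangent_inr_eq (hH : ∀ u v, H u v = H v u) (S : (κ → ℝ) →L[ℝ] (ι → ℝ)) :
    of (fun i j => H (S (Pi.single i 1), Pi.single i 1) (0, Pi.single j 1))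
      = θθBlock H + (LinearMap.toMatrix' (S : (κ → ℝ) →ₗ[ℝ] (ι → ℝ)))ᵀ * sθBlock H := by
  ext i j
  simp only [of_apply, Matrix.add_apply, Matrix.mul_apply, transpose_apply, θθBlock, sθBlock,
    LinearMap.toMatrix'_apply, coe_coe]
  rw [apply_prodMk_eq_add, apply_inl_eq_sum, add_comm]
  congr 1
  exact Finset.sum_congr rfl fun b _ => by rw [hH]

end Blocks

/-- The θ-Hessian of `log L̂*(θ;x) = K(ŝ(θ);θ) - ŝ(θ)·x` equals
`∇²_θK - (∇_s∇_θK)ᵀ K''⁻¹ (∇_s∇_θK)`, evaluated at `(ŝ(θ₀), θ₀)`. -/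
theorem stmt9 {m p : ℕ} (K : (Fin m → ℝ) → (Fin p → ℝ) → ℝ)
    (hK : ContDiff ℝ 2 (fun q : (Fin m → ℝ) × (Fin p → ℝ) => K q.1 q.2))
    (x : Fin m → ℝ) (θ₀ : Fin p → ℝ) (U : Set (Fin p → ℝ)) (hU : U ∈ nhds θ₀)
    (shat : (Fin p → ℝ) → (Fin m → ℝ)) (hshat : ∀ θ ∈ U, DifferentiableAt ℝ shat θ)
    (hposdef : (sHess (fun s => K s θ₀) (shat θ₀)).PosDef)
    (hsaddle : ∀ θ ∈ U, ∀ v, fderiv ℝ (fun s => K s θ) (shat θ) v = x ⬝ᵥ v) :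
    let A : Matrix (Fin m) (Fin m) ℝ := sHess (fun s => K s θ₀) (shat θ₀)
    let B : Matrix (Fin m) (Fin p) ℝ := Matrix.of fun a j =>
      fderiv ℝ (fun θ => fderiv ℝ (fun s => K s θ) (shat θ₀) (Pi.single a 1)) θ₀
        (Pi.single j 1)
    let D : Matrix (Fin p) (Fin p) ℝ := Matrix.of fun i j =>
      fderiv ℝ (fun θ => fderiv ℝ (fun θ' => K (shat θ₀) θ') θ (Pi.single j 1)) θ₀
        (Pi.single i 1)
    (Matrix.of fun i j : Fin p =>
        fderiv ℝ
          (fun θ => fderiv ℝ (fun θ' => K (shat θ') θ' - shat θ' ⬝ᵥ x) θ (Pi.single j 1))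
          θ₀ (Pi.single i 1))
      = D - Bᵀ * A⁻¹ * B := by
  intro A B D
  set F := fun q : (Fin m → ℝ) × (Fin p → ℝ) => K q.1 q.2
  set H := fderiv ℝ (fderiv ℝ F) (shat θ₀, θ₀)
  set L := LinearMap.toContinuousLinearMap (dotProductBilin ℝ ℝ x)
  have hH : ∀ u v, H u v = H v u := hK.contDiffAt.isSymmSndFDerivAt (by simp)
  have hA : A = ssBlock H := Matrix.ext fun _ _ => fderiv_fderiv_comp_prodMk_left_left hK _ _ _ _
  have hB : B = sθBlock H := Matrix.ext fun _ _ => fderiv_fderiv_comp_prodMk_left_right hK _ _ _ _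
  have hD : D = θθBlock H := Matrix.ext fun _ _ => fderiv_fderiv_comp_prodMk_right_right hK _ _ _ _
  have hdet : IsUnit (ssBlock H).det := hA ▸ (isUnit_iff_isUnit_det A).mp hposdef.isUnit
  have hcrit : ∀ᶠ θ in 𝓝 θ₀, fderiv ℝ (fun s => F (s, θ)) (shat θ) = L := by
    filter_upwards [hU] with θ hθ
    ext1 v
    simpa [L] using hsaddle θ hθ v
  have hℓ : (fun θ => K (shat θ) θ - shat θ ⬝ᵥ x) = fun θ => F (shat θ, θ) - L (shat θ) := by
    funext θ
    simp [F, L, dotProduct_comm]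
  have hHess : (of fun i j : Fin p =>
      fderiv ℝ (fun θ => fderiv ℝ (fun θ' => K (shat θ') θ' - shat θ' ⬝ᵥ x) θ (Pi.single j 1))
        θ₀ (Pi.single i 1))
      = of fun i j => H (fderiv ℝ shat θ₀ (Pi.single i 1), Pi.single i 1) (0, Pi.single j 1) := by
    rw [hℓ]
    exact Matrix.ext fun _ _ =>
      fderiv_fderiv_sub_comp_apply hK (mem_of_superset hU hshat) hcrit _ _
  have hsaddle_deriv :=
    fderiv_fderiv_apply_tangent_inl_eq_zero hK (hshat θ₀ (mem_of_mem_nhds hU)) hcrit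
  rw [hHess, of_apply_tangent_inr_eq hH, hA, hB, hD]
  exact add_transpose_mul_eq_sub_of_mul_eq_neg _ (ssBlock_transpose H hH) hdet
    (ssBlock_mul_toMatrix' hH hsaddle_deriv)
end
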